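/- First integral of the autonomous model equation: let y₀ ∈ ℂ with y₀ ≠ 0, let I ⊆ ℝ be a nonempty open interval, and let p : I → ℂ be twice differentiable and nonvanishing with p''(w) = p'(w)²/p(w) + (4i/y₀)·(p(w)² − 1) − 4·p(w)³ + 4/p(w) for all w ∈ I. Then there exists a constant C ∈ ℂ such that p'(w)² = (16/y₀²)·( −(y₀²/4)·p(w)⁴ + (i·y₀/2)·p(w)³ + C·p(w)² + (i·y₀/2)·p(w) − y₀²/4 ) for all w ∈ I. -/

import Mathlib

open Complex Filter

/-- First integral of the autonomous model equation
`p'' = (p')²/p + (4i/y₀)(p² − 1) − 4p³ + 4/p`: every nonvanishing twice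
differentiable solution on an open interval satisfies
`(p')² = (16/y₀²)·P(p; y₀, C)` for some constant `C`. -/
theorem autonomous_model_first_integral (y₀ : ℂ) (hy₀ : y₀ ≠ 0)
    (a b : ℝ) (hab : a < b) (p : ℝ → ℂ)
    (hd1 : ∀ w ∈ Set.Ioo a b, DifferentiableAt ℝ p w)
    (hd2 : ∀ w ∈ Set.Ioo a b, DifferentiableAt ℝ (deriv p) w)
    (hnz : ∀ w ∈ Set.Ioo a b, p w ≠ 0)
    (hode : ∀ w ∈ Set.Ioo a b,
      deriv (deriv p) w =
        (deriv p w) ^ 2 / p w + (4 * Complex.I / y₀) * ((p w) ^ 2 - 1)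
          - 4 * (p w) ^ 3 + 4 / p w) :
    ∃ C : ℂ, ∀ w ∈ Set.Ioo a b,
      (deriv p w) ^ 2 = (16 / y₀ ^ 2) *
        (-(y₀ ^ 2 / 4) * (p w) ^ 4 + (Complex.I * y₀ / 2) * (p w) ^ 3
          + C * (p w) ^ 2 + (Complex.I * y₀ / 2) * p w - y₀ ^ 2 / 4) := by
  set s := Set.Ioo a b with hs
  set g : ℝ → ℂ := fun w =>
    (deriv p w) ^ 2 / (p w) ^ 2 + 4 * (p w) ^ 2 - (8 * Complex.I / y₀) * p w
      - (8 * Complex.I / y₀) / p w + 4 / (p w) ^ 2 with hg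
  -- cleared form of the ODE
  have hode' : ∀ w ∈ s, deriv (deriv p) w * (y₀ * p w) =
      (deriv p w) ^ 2 * y₀ + 4 * Complex.I * ((p w) ^ 2 - 1) * p w
        - 4 * (p w) ^ 4 * y₀ + 4 * y₀ := by
    intro w hw
    have hpz := hnz w hw
    rw [hode w hw]
    field_simp
  -- g has derivative 0 on s
  have hgderiv : ∀ w ∈ s, HasDerivAt g 0 w := by
    intro w hw
    have hp : HasDerivAt p (deriv p w) w := (hd1 w hw).hasDerivAt
    have hp' : HasDerivAt (deriv p) (deriv (deriv p) w) w := (hd2 w hw).hasDerivAt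
    have hpz := hnz w hw
    have hpsq : HasDerivAt (fun w => (p w) ^ 2) (2 * p w * deriv p w) w := by
      have h := hp.mul hp
      have he : (fun w => (p w) ^ 2) = fun w => p w * p w := by
        funext t; ring
      rw [he]
      exact h.congr_deriv (by ring)
    have hdsq : HasDerivAt (fun w => (deriv p w) ^ 2)
        (2 * deriv p w * deriv (deriv p) w) w := by
      have h := hp'.mul hp'
      have he : (fun w => (deriv p w) ^ 2) = fun w => deriv p w * deriv p w := by
        funext t; ring
      rw [he]
      exact h.congr_deriv (by ring)
    have h1 : HasDerivAt (fun w => (deriv p w) ^ 2 / (p w) ^ 2)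
        ((2 * deriv p w * deriv (deriv p) w * (p w) ^ 2
          - (deriv p w) ^ 2 * (2 * p w * deriv p w)) / ((p w) ^ 2) ^ 2) w :=
      hdsq.div hpsq (pow_ne_zero 2 hpz)
    have h2 : HasDerivAt (fun w => 4 * (p w) ^ 2) (4 * (2 * p w * deriv p w)) w :=
      hpsq.const_mul (4 : ℂ)
    have h3 : HasDerivAt (fun w => (8 * Complex.I / y₀) * p w)
        ((8 * Complex.I / y₀) * deriv p w) w := hp.const_mul _
    have h4 : HasDerivAt (fun w => (8 * Complex.I / y₀) / p w)
        ((0 * p w - (8 * Complex.I / y₀) * deriv p w) / (p w) ^ 2) w :=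
      (hasDerivAt_const w _).div hp hpz
    have h5 : HasDerivAt (fun w => 4 / (p w) ^ 2)
        ((0 * (p w) ^ 2 - 4 * (2 * p w * deriv p w)) / ((p w) ^ 2) ^ 2) w :=
      (hasDerivAt_const w _).div hpsq (pow_ne_zero 2 hpz)
    have h := (((h1.add h2).sub h3).sub h4).add h5
    have hEq : (2 * deriv p w * deriv (deriv p) w * (p w) ^ 2
          - (deriv p w) ^ 2 * (2 * p w * deriv p w)) / ((p w) ^ 2) ^ 2
        + 4 * (2 * p w * deriv p w) - (8 * Complex.I / y₀) * deriv p w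
        - (0 * p w - (8 * Complex.I / y₀) * deriv p w) / (p w) ^ 2
        + (0 * (p w) ^ 2 - 4 * (2 * p w * deriv p w)) / ((p w) ^ 2) ^ 2 = 0 := by
      field_simp
      linear_combination (2 * deriv p w) * hode' w hw
    rw [hEq] at h
    exact h
  have hconv : Convex ℝ s := convex_Ioo a b
  have hdg : DifferentiableOn ℝ g s := fun w hw =>
    (hgderiv w hw).differentiableAt.differentiableWithinAt
  have hzero : ∀ w ∈ s, fderivWithin ℝ g s w = 0 := by
    intro w hw
    have := ((hgderiv w hw).hasFDerivAt.hasFDerivWithinAt).fderivWithin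
      (isOpen_Ioo.uniqueDiffOn w hw)
    rw [this]
    ext
    simp
  set w₀ : ℝ := (a + b) / 2 with hw₀
  have hw₀s : w₀ ∈ s := ⟨by simp [hw₀]; linarith, by simp [hw₀]; linarith⟩
  obtain ⟨c, hc⟩ : ∃ c, ∀ w ∈ s, g w = c :=
    ⟨g w₀, fun w hw => hconv.is_const_of_fderivWithin_eq_zero hdg hzero hw hw₀s⟩
  refine ⟨y₀ ^ 2 * c / 16, fun w hw => ?_⟩
  have hpz := hnz w hw
  have hthis : (deriv p w) ^ 2 / (p w) ^ 2 + 4 * (p w) ^ 2 - (8 * Complex.I / y₀) * p w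
      - (8 * Complex.I / y₀) / p w + 4 / (p w) ^ 2 = c := hc w hw
  field_simp at hthis
  rw [div_mul_eq_mul_div, eq_div_iff (pow_ne_zero 2 hy₀)]
  refine mul_right_cancel₀ (pow_ne_zero 3 hpz) ?_
  linear_combination (y₀ * p w ^ 3) * hthis
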